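/- Suppose π* ≥ 1 satisfies Φ(π*) ≤ c. Then for every d ∈ D, the output vector δ(π*,d) of pCR-PRM(π*) is a feasible discharging vector for d and σ(d) ≤ π* · R(d, δ(π*,d)); that is, pCR-PRM(π*) is π*-competitive for the online peak-demand reduction maximization problem. -/

import Mathlib

/-!
Writing `δ = pCR-PRM(π)`, feasibility holds slotwise because `0 ≤ σ(d^t) / π ≤ σ(d^t)` and
`σ(d^t) ≤ min(dmax, max_{k ≤ t} d_k)`, while `∑ δ_t ≤ Φ(π) ≤ c` by the definition of `Φ`.
For competitiveness, truncating an optimal discharge for `d` below `d^t ≤ d` shows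
`σ(d) ≤ σ(d^t) + (max d − max_{k ≤ t} d_k)`. Hence every residual demand satisfies
`d_t − δ_t ≤ max_{k ≤ t} d_k − σ(d^t)/π ≤ max d − σ(d)/π`, i.e. `σ(d)/π ≤ R(d, δ)`.
-/

open Finset MeasureTheory

noncomputable section

/-- A discharging vector `δ` is feasible for demand profile `d` (with capacity `c`
and per-slot limit `dmax`). -/
def Feasible {T : ℕ} (c dmax : ℝ) (d δ : Fin T → ℝ) : Prop :=
  (∑ t, δ t) ≤ c ∧ ∀ t, 0 ≤ δ t ∧ δ t ≤ min dmax (d t)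

/-- Peak-demand reduction `R(d, δ)`. -/
noncomputable def Red {T : ℕ} (d δ : Fin T → ℝ) : ℝ :=
  (⨆ t, d t) - ⨆ t, (d t - δ t)

/-- Offline optimal peak-demand reduction `σ(d)`. -/
noncomputable def offOpt {T : ℕ} (c dmax : ℝ) (d : Fin T → ℝ) : ℝ :=
  sSup {r | ∃ δ : Fin T → ℝ, Feasible c dmax d δ ∧ r = Red d δ}

/-- Prefix maximum `max_{k ∈ [t]} d_k`. -/
noncomputable def prefMax {T : ℕ} (d : Fin T → ℝ) (t : Fin T) : ℝ :=
  ⨆ k : {k : Fin T // k ≤ t}, d k.1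

/-- The uncertainty set `D`: all profiles with entries in `[dlo, dhi]`. -/
def inD {T : ℕ} (dlo dhi : ℝ) (d : Fin T → ℝ) : Prop :=
  ∀ t, dlo ≤ d t ∧ d t ≤ dhi

/-- Reference profile `d^t`: observed demands up to slot `t`, lowest demand `dlo` afterwards. -/
def ref {T : ℕ} (dlo : ℝ) (d : Fin T → ℝ) (t : Fin T) : Fin T → ℝ :=
  fun k => if k ≤ t then d k else dlo

/-- Output of `pCR-PRM(π)` at slot `t`:
`δ_t(π, d) = [d_t − max_{k∈[t]} d_k + σ(d^t)/π]⁺`. -/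
noncomputable def pcr {T : ℕ} (c dmax dlo : ℝ) (π : ℝ) (d : Fin T → ℝ) (t : Fin T) : ℝ :=
  max (d t - prefMax d t + offOpt c dmax (ref dlo d t) / π) 0

/-- Inventory function `Φ(π) = sup_{d ∈ D} ∑_t δ_t(π, d)`. -/
noncomputable def Phi (T : ℕ) (c dmax dlo dhi : ℝ) (π : ℝ) : ℝ :=
  sSup {s | ∃ d : Fin T → ℝ, inD dlo dhi d ∧ s = ∑ t, pcr c dmax dlo π d t}



variable {T : ℕ} {c dmax : ℝ}

theorem red_zero (d : Fin T → ℝ) : Red d 0 = 0 := by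
  simp [Red]

theorem feasible_zero (hc : 0 ≤ c) (hdmax : 0 ≤ dmax) {d : Fin T → ℝ} (hd : ∀ t, 0 ≤ d t) :
    Feasible c dmax d 0 :=
  ⟨by simpa using hc, fun t => ⟨le_rfl, le_min hdmax (hd t)⟩⟩

theorem Feasible.inf {d d' δ : Fin T → ℝ} (hδ : Feasible c dmax d δ) (hd' : ∀ t, 0 ≤ d' t) :
    Feasible c dmax d' (fun t => min (δ t) (d' t)) :=
  ⟨(sum_le_sum fun _ _ => min_le_left _ _).trans hδ.1, fun t =>
    ⟨le_min (hδ.2 t).1 (hd' t),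
      min_le_min ((hδ.2 t).2.trans (min_le_left _ _)) le_rfl⟩⟩

theorem le_prefMax (d : Fin T → ℝ) {k t : Fin T} (h : k ≤ t) : d k ≤ prefMax d t :=
  Finite.le_ciSup (fun k : {k : Fin T // k ≤ t} => d k.1) ⟨k, h⟩

theorem prefMax_le {d : Fin T → ℝ} {t : Fin T} {x : ℝ} (h : ∀ k ≤ t, d k ≤ x) :
    prefMax d t ≤ x :=
  have : Nonempty {k : Fin T // k ≤ t} := ⟨⟨t, le_rfl⟩⟩
  ciSup_le fun k => h k.1 k.2

theorem prefMax_le_iSup (d : Fin T → ℝ) (t : Fin T) : prefMax d t ≤ ⨆ k, d k :=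
  prefMax_le fun k _ => Finite.le_ciSup d k

section Reference

variable {dlo : ℝ} {d : Fin T → ℝ} (hd : ∀ k, dlo ≤ d k)
include hd

theorem ref_le (t k : Fin T) : ref dlo d t k ≤ d k := by
  unfold ref
  split_ifs
  exacts [le_rfl, hd k]

theorem ref_nonneg (hdlo : 0 ≤ dlo) (t k : Fin T) : 0 ≤ ref dlo d t k := by
  unfold ref
  split_ifs
  exacts [hdlo.trans (hd k), hdlo]

theorem iSup_ref (t : Fin T) : (⨆ k, ref dlo d t k) = prefMax d t := by
  have : Nonempty (Fin T) := ⟨t⟩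
  refine le_antisymm (ciSup_le fun k => ?_) (prefMax_le fun k hk => ?_)
  · unfold ref
    split_ifs with hk
    exacts [le_prefMax d hk, (hd t).trans (le_prefMax d le_rfl)]
  · simpa [ref, hk] using Finite.le_ciSup (ref dlo d t) k

end Reference

variable [NeZero T]

theorem red_le_min {d δ : Fin T → ℝ} (hδ : Feasible c dmax d δ) :
    Red d δ ≤ min dmax (⨆ t, d t) := by
  obtain ⟨t, ht⟩ := Finite.exists_max d
  have hpeak : (⨆ s, d s) = d t := le_antisymm (ciSup_le ht) (Finite.le_ciSup d t)
  have hres : d t - δ t ≤ ⨆ s, (d s - δ s) := Finite.le_ciSup (fun s => d s - δ s) t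
  calc Red d δ ≤ d t - (d t - δ t) := by unfold Red; rw [hpeak]; linarith
    _ = δ t := sub_sub_cancel _ _
    _ ≤ min dmax (⨆ s, d s) := hpeak ▸ (hδ.2 t).2

theorem bddAbove_reductions (d : Fin T → ℝ) :
    BddAbove {r | ∃ δ, Feasible c dmax d δ ∧ r = Red d δ} :=
  ⟨min dmax (⨆ t, d t), by rintro r ⟨δ, hδ, rfl⟩; exact red_le_min hδ⟩

theorem red_le_offOpt {d δ : Fin T → ℝ} (hδ : Feasible c dmax d δ) :
    Red d δ ≤ offOpt c dmax d :=
  le_csSup (bddAbove_reductions d) ⟨δ, hδ, rfl⟩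

section NonnegProfile

variable (hc : 0 ≤ c) (hdmax : 0 ≤ dmax) {d : Fin T → ℝ} (hd : ∀ t, 0 ≤ d t)
include hc hdmax hd

theorem offOpt_nonneg : 0 ≤ offOpt c dmax d :=
  red_zero d ▸ red_le_offOpt (feasible_zero hc hdmax hd)

theorem offOpt_le_min : offOpt c dmax d ≤ min dmax (⨆ t, d t) :=
  csSup_le ⟨0, 0, feasible_zero hc hdmax hd, (red_zero d).symm⟩
    (by rintro r ⟨δ, hδ, rfl⟩; exact red_le_min hδ)

theorem offOpt_le_offOpt_add {d' : Fin T → ℝ} (hd' : ∀ t, 0 ≤ d' t) (hle : ∀ t, d' t ≤ d t) :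
    offOpt c dmax d ≤ offOpt c dmax d' + ((⨆ t, d t) - ⨆ t, d' t) := by
  refine csSup_le ⟨0, 0, feasible_zero hc hdmax hd, (red_zero d).symm⟩ ?_
  rintro r ⟨δ, hδ, rfl⟩
  have hres_nonneg : 0 ≤ ⨆ t, (d t - δ t) :=
    (sub_nonneg.2 ((hδ.2 0).2.trans (min_le_right _ _))).trans
      (Finite.le_ciSup (fun t => d t - δ t) 0)
  -- `d' - min δ d' = max (d' - δ) 0 ≤ max (d - δ) 0`
  have hres : (⨆ t, (d' t - min (δ t) (d' t))) ≤ ⨆ t, (d t - δ t) := by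
    refine ciSup_le fun t => ?_
    rw [← max_sub_sub_left, sub_self]
    exact max_le (le_trans (by linarith [hle t]) (Finite.le_ciSup (fun s => d s - δ s) t))
      hres_nonneg
  have := red_le_offOpt (hδ.inf hd')
  unfold Red at this ⊢
  linarith

end NonnegProfile

section Algorithm

variable {dlo π : ℝ} (hc : 0 ≤ c) (hdmax : 0 ≤ dmax) (hdlo : 0 ≤ dlo) (hπ : 1 ≤ π)
  {d : Fin T → ℝ} (hd : ∀ k, dlo ≤ d k)
include hc hdmax hdlo hπ hd

theorem pcr_le_min (t : Fin T) : pcr c dmax dlo π d t ≤ min dmax (d t) := by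
  set σ := offOpt c dmax (ref dlo d t)
  have hσ0 : 0 ≤ σ := offOpt_nonneg hc hdmax (ref_nonneg hd hdlo t)
  have hσ : σ ≤ min dmax (prefMax d t) :=
    iSup_ref hd t ▸ offOpt_le_min hc hdmax (ref_nonneg hd hdlo t)
  have hσπ : σ / π ≤ σ := div_le_self hσ0 hπ
  have hσπ0 : 0 ≤ σ / π := div_nonneg hσ0 (zero_le_one.trans hπ)
  have hpeak : d t ≤ prefMax d t := le_prefMax d le_rfl
  refine max_le (le_min ?_ ?_) (le_min hdmax (hdlo.trans (hd t)))
  · linarith [min_le_left dmax (prefMax d t)]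
  · linarith [min_le_right dmax (prefMax d t)]

theorem sub_pcr_le (t : Fin T) :
    d t - pcr c dmax dlo π d t ≤ (⨆ s, d s) - offOpt c dmax d / π := by
  set σ := offOpt c dmax (ref dlo d t)
  set gap := (⨆ s, d s) - prefMax d t
  have hgap : 0 ≤ gap := sub_nonneg.2 (prefMax_le_iSup d t)
  have hdrop : offOpt c dmax d ≤ σ + gap := by
    simpa only [iSup_ref hd t] using offOpt_le_offOpt_add hc hdmax
      (fun k => hdlo.trans (hd k)) (ref_nonneg hd hdlo t) (ref_le hd t)
  have hdrop_div : offOpt c dmax d / π ≤ σ / π + gap :=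
    calc offOpt c dmax d / π ≤ (σ + gap) / π :=
          div_le_div_of_nonneg_right hdrop (zero_le_one.trans hπ)
      _ = σ / π + gap / π := add_div _ _ _
      _ ≤ σ / π + gap := add_le_add_right (div_le_self hgap hπ) _
  have hpcr : d t - prefMax d t + σ / π ≤ pcr c dmax dlo π d t := le_max_left _ _
  linarith

theorem offOpt_le_mul_red : offOpt c dmax d ≤ π * Red d (pcr c dmax dlo π d) := by
  have hres := ciSup_le (sub_pcr_le hc hdmax hdlo hπ hd)
  rw [← div_le_iff₀' (zero_lt_one.trans_le hπ)]
  unfold Red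
  linarith

end Algorithm

theorem sum_pcr_le_Phi {dlo dhi π : ℝ} (hc : 0 ≤ c) (hdmax : 0 ≤ dmax) (hdlo : 0 ≤ dlo)
    (hπ : 1 ≤ π) {d : Fin T → ℝ} (hD : inD dlo dhi d) :
    ∑ t, pcr c dmax dlo π d t ≤ Phi T c dmax dlo dhi π := by
  refine le_csSup ⟨T * dmax, ?_⟩ ⟨d, hD, rfl⟩
  rintro s ⟨d', hD', rfl⟩
  calc ∑ t, pcr c dmax dlo π d' t ≤ ∑ _t : Fin T, dmax := sum_le_sum fun t _ =>
        (pcr_le_min hc hdmax hdlo hπ (fun k => (hD' k).1) t).trans (min_le_left _ _)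
    _ = T * dmax := by simp

theorem feasible_pcr {dlo dhi π : ℝ} (hc : 0 ≤ c) (hdmax : 0 ≤ dmax) (hdlo : 0 ≤ dlo)
    (hπ : 1 ≤ π) (hΦ : Phi T c dmax dlo dhi π ≤ c) {d : Fin T → ℝ} (hD : inD dlo dhi d) :
    Feasible c dmax d (pcr c dmax dlo π d) :=
  ⟨(sum_pcr_le_Phi hc hdmax hdlo hπ hD).trans hΦ, fun t =>
    ⟨le_max_right _ _, pcr_le_min hc hdmax hdlo hπ (fun k => (hD k).1) t⟩⟩

theorem stmt12_general (T : ℕ) (hT : 0 < T) (c dmax dlo dhi : ℝ)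
    (hc : 0 < c) (hdmax : 0 < dmax) (hdlo : 0 < dlo)
    (π : ℝ) (hπ : 1 ≤ π) (hΦ : Phi T c dmax dlo dhi π ≤ c) :
    ∀ d : Fin T → ℝ, inD dlo dhi d →
      Feasible c dmax d (pcr c dmax dlo π d) ∧
        offOpt c dmax d ≤ π * Red d (pcr c dmax dlo π d) := by
  have : NeZero T := ⟨hT.ne'⟩
  intro d hD
  exact ⟨feasible_pcr hc.le hdmax.le hdlo.le hπ hΦ hD,
    offOpt_le_mul_red hc.le hdmax.le hdlo.le hπ fun k => (hD k).1⟩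

/-- if `Φ(π*) ≤ c`, then `pCR-PRM(π*)` is feasible and `π*`-competitive:
`σ(d) ≤ π* · R(d, δ(π*, d))` for all `d ∈ D`. -/
theorem stmt12 (T : ℕ) (hT : 0 < T) (c dmax dlo dhi : ℝ)
    (hc : 0 < c) (hdmax : 0 < dmax) (hdlo : 0 < dlo) (hbd : dlo ≤ dhi)
    (π : ℝ) (hπ : 1 ≤ π) (hΦ : Phi T c dmax dlo dhi π ≤ c) :
    ∀ d : Fin T → ℝ, inD dlo dhi d →
      Feasible c dmax d (pcr c dmax dlo π d) ∧
        offOpt c dmax d ≤ π * Red d (pcr c dmax dlo π d) :=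
  stmt12_general T hT c dmax dlo dhi hc hdmax hdlo π hπ hΦ
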